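/- Let R be an integrally closed Noetherian local domain, let A = R[[s]], and let M be a finitely generated A-module annihilated both by a nonzero element r ∈ R and by a monic polynomial h(s) ∈ R[s]. Then M is a pseudo-null A-module, i.e. M_p = 0 for every height one prime p of A. -/

import Mathlib

open PowerSeries

/-- A power series all of whose coefficients lie in a finitely generated ideal `q`
lies in the extension of `q` to the power series ring. -/
lemma coeffs_mem_imp_mem_map {R : Type*} [CommRing R] (q : Ideal R) (hfg : q.FG)
    (f : PowerSeries R) (hf : ∀ n, PowerSeries.coeff n f ∈ q) :
    f ∈ Ideal.map (PowerSeries.C) q := by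
  obtain ⟨n, g, hg⟩ := Submodule.fg_iff_exists_fin_generating_family.mp hfg
  have hmem : ∀ k : ℕ, ∃ c : Fin n → R, (∑ i, c i • g i) = PowerSeries.coeff k f := by
    intro k
    exact (Submodule.mem_span_range_iff_exists_fun R).mp (hg ▸ hf k)
  choose c hc using hmem
  have hfeq : f = ∑ i, (PowerSeries.mk fun k => c k i) * PowerSeries.C (g i) := by
    ext k
    rw [map_sum]
    simp only [PowerSeries.coeff_mul_C, PowerSeries.coeff_mk]
    rw [← hc k]
    simp [smul_eq_mul]
  rw [hfeq]
  refine Ideal.sum_mem _ fun i _ => Ideal.mul_mem_left _ _ ?_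
  exact Ideal.mem_map_of_mem _ (hg ▸ Ideal.subset_span ⟨i, rfl⟩)

/-- Let `R` be an integrally closed Noetherian local domain and `A = R[[s]]`.  If a finitely
generated `A`-module `M` is annihilated both by a nonzero element `r ∈ R` (viewed in `A` via
the constants) and by a monic polynomial `h(s) ∈ R[s]` (viewed in `A`), then `M` is
pseudo-null: its localization at every height one prime of `A` vanishes. -/
theorem stmt_17 {R : Type*} [CommRing R] [IsDomain R] [IsNoetherianRing R] [IsLocalRing R]
    [IsIntegrallyClosed R]
    (M : Type*) [AddCommGroup M] [Module (PowerSeries R) M] [Module.Finite (PowerSeries R) M]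
    (r : R) (hr : r ≠ 0) (hrM : ∀ x : M, (PowerSeries.C r) • x = 0)
    (h : Polynomial R) (hmon : h.Monic) (hhM : ∀ x : M, ((h : PowerSeries R)) • x = 0) :
    ∀ (p : Ideal (PowerSeries R)) (hp : p.IsPrime),
      Order.height (⟨p, hp⟩ : PrimeSpectrum (PowerSeries R)) = 1 →
      Subsingleton (LocalizedModule (@Ideal.primeCompl (PowerSeries R) _ p hp) M) := by
  intro p hp hht
  by_cases hrp : PowerSeries.C r ∈ p
  · by_cases hhp : (h : PowerSeries R) ∈ p
    · -- derive a contradiction: p has height at least 2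
      exfalso
      set q : Ideal R := Ideal.comap (PowerSeries.C) p with hq
      have hqprime : q.IsPrime := Ideal.comap_isPrime _ p
      have hrq : r ∈ q := hrp
      -- Q = kernel of reduction of coefficients mod q
      set φ : PowerSeries R →+* PowerSeries (R ⧸ q) :=
        PowerSeries.map (Ideal.Quotient.mk q) with hφ
      set Q : Ideal (PowerSeries R) := RingHom.ker φ with hQ
      have hQprime : Q.IsPrime := RingHom.ker_isPrime φ
      have hmemQ : ∀ f : PowerSeries R, f ∈ Q ↔ ∀ n, PowerSeries.coeff n f ∈ q := by
        intro f
        constructor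
        · intro hf n
          have : PowerSeries.coeff n (φ f) = 0 := by rw [hf]; simp
          rw [hφ, PowerSeries.coeff_map] at this
          exact (Ideal.Quotient.eq_zero_iff_mem).mp this
        · intro hf
          have : φ f = 0 := by
            ext n
            rw [hφ, PowerSeries.coeff_map]
            simpa using (Ideal.Quotient.eq_zero_iff_mem).mpr (hf n)
          exact this
      -- Q ≤ p
      have hQp : Q ≤ p := by
        intro f hf
        have : f ∈ Ideal.map (PowerSeries.C) q :=
          coeffs_mem_imp_mem_map q (IsNoetherian.noetherian q) f ((hmemQ f).mp hf)
        exact Ideal.map_le_iff_le_comap.mpr le_rfl this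
      -- h ∉ Q
      have hhQ : (h : PowerSeries R) ∉ Q := by
        intro hc
        have := (hmemQ _).mp hc h.natDegree
        rw [Polynomial.coeff_coe, hmon.coeff_natDegree] at this
        exact hqprime.ne_top (Ideal.eq_top_of_isUnit_mem _ this isUnit_one)
      -- C r ∈ Q, so Q ≠ ⊥
      have hrQ : PowerSeries.C r ∈ Q := by
        rw [hmemQ]
        intro n
        rw [PowerSeries.coeff_C]
        split
        · exact hrq
        · exact q.zero_mem
      have hQne : Q ≠ ⊥ := by
        intro hc
        rw [hc, Ideal.mem_bot] at hrQ
        have := congrArg (PowerSeries.coeff 0) hrQ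
        simp at this
        exact hr this
      -- set up prime spectrum points
      set Ppt : PrimeSpectrum (PowerSeries R) := ⟨p, hp⟩
      set Qpt : PrimeSpectrum (PowerSeries R) := ⟨Q, hQprime⟩
      set Zpt : PrimeSpectrum (PowerSeries R) := ⟨⊥, Ideal.bot_prime⟩
      have hQP : Qpt < Ppt := lt_of_le_of_ne hQp (fun hc => hhQ (by
        have : Q = p := congrArg PrimeSpectrum.asIdeal hc
        rw [this]; exact hhp))
      have hZQ : Zpt < Qpt := lt_of_le_of_ne bot_le (fun hc => hQne (by
        have : (⊥ : Ideal (PowerSeries R)) = Q := congrArg PrimeSpectrum.asIdeal hc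
        exact this.symm))
      have hPfin : Order.height Ppt < ⊤ := by
        rw [hht]; exact lt_top_iff_ne_top.mpr (by simp)
      have hQfin : Order.height Qpt < ⊤ :=
        lt_of_le_of_lt (Order.height_mono hQP.le) hPfin
      have h1 : Order.height Qpt < Order.height Ppt :=
        Order.height_strictMono hQP hQfin
      rw [hht] at h1
      have h2 : Order.height Qpt = 0 := ENat.lt_one_iff_eq_zero.mp h1
      have hZfin : Order.height Zpt < ⊤ :=
        lt_of_le_of_lt (Order.height_mono hZQ.le) hQfin
      have h3 : Order.height Zpt < Order.height Qpt :=
        Order.height_strictMono hZQ hZfin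
      rw [h2] at h3
      simp at h3
    · exact LocalizedModule.subsingleton_iff.mpr fun m => ⟨_, hhp, hhM m⟩
  · exact LocalizedModule.subsingleton_iff.mpr fun m => ⟨_, hrp, hrM m⟩
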